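/- arXiv:2111.06431 — 4 statements merged into one kernel-verified Lean document; each statement's English description precedes it below -/
import Mathlib

section
/- Let f be a twice continuously differentiable real-valued function on [0,1]. Then for every x ∈ [0,1] one has |f'(x)| ≤ 9 ∫_0^1 |f(t)| dt + ∫_0^1 |f''(t)| dt. -/
open MeasureTheory Set

/-- For a twice continuously differentiable function `f` on `[0,1]`, one has
`|f'(x)| ≤ 9 ∫₀¹ |f| + ∫₀¹ |f''|` for every `x ∈ [0,1]`. -/
theorem deriv_bound_of_C2 (f f' f'' : ℝ → ℝ)
    (hf' : ∀ x ∈ Icc (0:ℝ) 1, HasDerivWithinAt f (f' x) (Icc (0:ℝ) 1) x)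
    (hf'' : ∀ x ∈ Icc (0:ℝ) 1, HasDerivWithinAt f' (f'' x) (Icc (0:ℝ) 1) x)
    (hcont : ContinuousOn f'' (Icc (0:ℝ) 1)) :
    ∀ x ∈ Icc (0:ℝ) 1,
      |f' x| ≤ 9 * (∫ t in (0:ℝ)..1, |f t|) + ∫ t in (0:ℝ)..1, |f'' t| := by
  intro x hx
  have hfc : ContinuousOn f (Icc (0:ℝ) 1) := fun t ht => (hf' t ht).continuousWithinAt
  have hf'c : ContinuousOn f' (Icc (0:ℝ) 1) := fun t ht => (hf'' t ht).continuousWithinAt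
  -- integrability of |f| on subintervals of [0,1]
  have hsub : ∀ u v : ℝ, 0 ≤ u → u ≤ 1 → 0 ≤ v → v ≤ 1 → uIcc u v ⊆ Icc (0:ℝ) 1 := by
    intro u v hu hu1 hv hv1
    have : Icc (0:ℝ) 1 = uIcc 0 1 := (uIcc_of_le (by norm_num)).symm
    rw [this]
    exact uIcc_subset_uIcc (by rw [uIcc_of_le (by norm_num)]; exact ⟨hu, hu1⟩)
      (by rw [uIcc_of_le (by norm_num)]; exact ⟨hv, hv1⟩)
  have hfint : ∀ u v : ℝ, 0 ≤ u → u ≤ 1 → 0 ≤ v → v ≤ 1 →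
      IntervalIntegrable (fun t => |f t|) volume u v := by
    intro u v hu hu1 hv hv1
    exact ((hfc.mono (hsub u v hu hu1 hv hv1)).abs).intervalIntegrable
  have hf''int : ∀ u v : ℝ, 0 ≤ u → u ≤ 1 → 0 ≤ v → v ≤ 1 →
      IntervalIntegrable f'' volume u v := by
    intro u v hu hu1 hv hv1
    exact (hcont.mono (hsub u v hu hu1 hv hv1)).intervalIntegrable
  have hf''absint : ∀ u v : ℝ, 0 ≤ u → u ≤ 1 → 0 ≤ v → v ≤ 1 →
      IntervalIntegrable (fun t => |f'' t|) volume u v := fun u v hu hu1 hv hv1 =>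
    (hf''int u v hu hu1 hv hv1).abs
  -- minimum points of |f| on [0,1/3] and [2/3,1]
  obtain ⟨a, ha, hamin⟩ := (isCompact_Icc : IsCompact (Icc (0:ℝ) (1/3))).exists_isMinOn
    ⟨0, by norm_num⟩
    ((hfc.mono (Icc_subset_Icc le_rfl (by norm_num))).abs)
  obtain ⟨b, hb, hbmin⟩ := (isCompact_Icc : IsCompact (Icc (2/3:ℝ) 1)).exists_isMinOn
    ⟨1, by norm_num⟩
    ((hfc.mono (Icc_subset_Icc (by norm_num) le_rfl)).abs)
  have ha0 : (0:ℝ) ≤ a := ha.1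
  have ha3 : a ≤ 1/3 := ha.2
  have hb3 : (2/3:ℝ) ≤ b := hb.1
  have hb1 : b ≤ 1 := hb.2
  -- |f a| ≤ 3 ∫_0^{1/3} |f|
  have hIa : |f a| * (1/3) ≤ ∫ t in (0:ℝ)..(1/3), |f t| := by
    have h := intervalIntegral.integral_mono_on (by norm_num : (0:ℝ) ≤ 1/3)
      (intervalIntegrable_const (c := |f a|)) (hfint 0 (1/3) le_rfl (by norm_num) (by norm_num) (by norm_num))
      (fun t ht => hamin ht)
    rw [intervalIntegral.integral_const, smul_eq_mul] at h
    norm_num at h ⊢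
    linarith
  have hIb : |f b| * (1/3) ≤ ∫ t in (2/3:ℝ)..1, |f t| := by
    have h := intervalIntegral.integral_mono_on (by norm_num : (2/3:ℝ) ≤ 1)
      (intervalIntegrable_const (c := |f b|)) (hfint (2/3) 1 (by norm_num) (by norm_num) (by norm_num) le_rfl)
      (fun t ht => hbmin ht)
    rw [intervalIntegral.integral_const, smul_eq_mul] at h
    norm_num at h ⊢
    linarith
  -- sum of partial integrals bounded by full integral
  have hsplit : (∫ t in (0:ℝ)..(1/3), |f t|) + (∫ t in (1/3:ℝ)..(2/3), |f t|)
      + (∫ t in (2/3:ℝ)..1, |f t|) = ∫ t in (0:ℝ)..1, |f t| := by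
    rw [intervalIntegral.integral_add_adjacent_intervals (hfint 0 (1/3) le_rfl (by norm_num) (by norm_num) (by norm_num))
      (hfint (1/3) (2/3) (by norm_num) (by norm_num) (by norm_num) (by norm_num)),
      intervalIntegral.integral_add_adjacent_intervals (hfint 0 (2/3) le_rfl (by norm_num) (by norm_num) (by norm_num))
      (hfint (2/3) 1 (by norm_num) (by norm_num) (by norm_num) le_rfl)]
  have hmid : (0:ℝ) ≤ ∫ t in (1/3:ℝ)..(2/3), |f t| :=
    intervalIntegral.integral_nonneg (by norm_num) (fun t _ => abs_nonneg _)
  -- MVT on [a,b]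
  have hab : a < b := by linarith
  obtain ⟨c, hc, hceq⟩ := exists_hasDerivAt_eq_slope f f' hab
    (hfc.mono (Icc_subset_Icc ha0 hb1))
    (fun t ht => (hf' t ⟨le_of_lt (lt_of_le_of_lt ha0 ht.1),
        le_of_lt (lt_of_lt_of_le ht.2 hb1)⟩).hasDerivAt
      (Icc_mem_nhds (lt_of_le_of_lt ha0 ht.1) (lt_of_lt_of_le ht.2 hb1)))
  have hc0 : (0:ℝ) < c := lt_of_le_of_lt ha0 hc.1
  have hc1 : c < 1 := lt_of_lt_of_le hc.2 hb1
  -- bound |f' c|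
  have hfc_bound : |f' c| ≤ 3 * (|f a| + |f b|) := by
    rw [hceq, abs_div, abs_of_pos (by linarith : (0:ℝ) < b - a)]
    rw [div_le_iff₀ (by linarith : (0:ℝ) < b - a)]
    have h1 : |f b - f a| ≤ |f b| + |f a| := abs_sub _ _
    nlinarith [abs_nonneg (f a), abs_nonneg (f b)]
  -- FTC from c to x
  have hx0 : (0:ℝ) ≤ x := hx.1
  have hx1 : x ≤ 1 := hx.2
  have hftc : f' x - f' c = ∫ t in c..x, f'' t := by
    rcases le_total c x with h | h
    · exact (intervalIntegral.integral_eq_sub_of_hasDeriv_right_of_le h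
        (hf'c.mono (Icc_subset_Icc (le_of_lt hc0) hx1))
        (fun t ht => ((hf'' t ⟨le_of_lt (lt_trans hc0 ht.1),
            le_of_lt (lt_of_lt_of_le ht.2 hx1)⟩).hasDerivAt
          (Icc_mem_nhds (lt_trans hc0 ht.1) (lt_of_lt_of_le ht.2 hx1))).hasDerivWithinAt)
        (hf''int c x (le_of_lt hc0) (le_of_lt hc1) hx0 hx1)).symm
    · have := intervalIntegral.integral_eq_sub_of_hasDeriv_right_of_le h
        (hf'c.mono (Icc_subset_Icc hx0 (le_of_lt hc1)))
        (fun t ht => ((hf'' t ⟨le_of_lt (lt_of_le_of_lt hx0 ht.1),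
            le_of_lt (lt_trans ht.2 hc1)⟩).hasDerivAt
          (Icc_mem_nhds (lt_of_le_of_lt hx0 ht.1) (lt_trans ht.2 hc1))).hasDerivWithinAt)
        (hf''int x c hx0 hx1 (le_of_lt hc0) (le_of_lt hc1))
      rw [intervalIntegral.integral_symm]
      linarith
  -- bound the f'' integral
  have hI2 : |∫ t in c..x, f'' t| ≤ ∫ t in (0:ℝ)..1, |f'' t| := by
    rcases le_total c x with h | h
    · calc |∫ t in c..x, f'' t| ≤ ∫ t in c..x, |f'' t| :=
            intervalIntegral.abs_integral_le_integral_abs h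
        _ ≤ ∫ t in (0:ℝ)..1, |f'' t| :=
            intervalIntegral.integral_mono_interval (le_of_lt hc0) h hx1
              (Filter.Eventually.of_forall (fun t => abs_nonneg _))
              (hf''absint 0 1 le_rfl (by norm_num) (by norm_num) le_rfl)
    · rw [intervalIntegral.integral_symm, abs_neg]
      calc |∫ t in x..c, f'' t| ≤ ∫ t in x..c, |f'' t| :=
            intervalIntegral.abs_integral_le_integral_abs h
        _ ≤ ∫ t in (0:ℝ)..1, |f'' t| :=
            intervalIntegral.integral_mono_interval hx0 h (le_of_lt hc1)
              (Filter.Eventually.of_forall (fun t => abs_nonneg _))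
              (hf''absint 0 1 le_rfl (by norm_num) (by norm_num) le_rfl)
  -- put it all together
  have h1 : |f' x| ≤ |f' c| + |∫ t in c..x, f'' t| := by
    have : f' x = f' c + ∫ t in c..x, f'' t := by linarith
    rw [this]; exact abs_add_le _ _
  linarith
end

section
/- Let α > 0, δ > 0 with αδ < 1, and c > 0, and let a : (0,1] → ℝ be a nonnegative measurable function with a(s) ≥ c s^α for all s ∈ (0,1]. Then there exists a constant C > 0 such that for every λ ≥ 1, ∫_0^{λ^{−δ}} (1 + λ² a(s)²)^{−1/4} ds ≤ C λ^{−(1+2δ)/(2+α)}. -/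
open MeasureTheory Set

/-- For `α, δ > 0` with `αδ < 1` and `a(s) ≥ c sᵅ` on `(0,1]`, there is `C > 0` with
`∫₀^(λ^(-δ)) (1 + λ² a(s)²)^(-1/4) ds ≤ C λ^(-(1+2δ)/(2+α))` for all `λ ≥ 1`. -/
theorem integral_quarter_power_bound (α δ c : ℝ) (hα : 0 < α) (hδ : 0 < δ)
    (hαδ : α * δ < 1) (hc : 0 < c) (a : ℝ → ℝ) (hmeas : Measurable a)
    (hnonneg : ∀ s ∈ Ioc (0:ℝ) 1, 0 ≤ a s)
    (hlower : ∀ s ∈ Ioc (0:ℝ) 1, c * s ^ α ≤ a s) :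
    ∃ C : ℝ, 0 < C ∧ ∀ lam : ℝ, 1 ≤ lam →
      (∫ s in Ioo (0:ℝ) (lam ^ (-δ)), (1 + lam ^ 2 * (a s) ^ 2) ^ (-(1/4) : ℝ))
        ≤ C * lam ^ (-(1 + 2 * δ) / (2 + α)) := by
  have h2α : (0:ℝ) < 2 + α := by linarith
  set θ : ℝ := (1 + 2 * δ) / (2 + α) with hθdef
  have hθpos : 0 < θ := by positivity
  have hθδ : δ ≤ θ := by
    rw [hθdef, le_div_iff₀ h2α]; nlinarith
  refine ⟨1 + (Real.sqrt c)⁻¹, by positivity, ?_⟩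
  intro lam hlam
  have hlam0 : (0:ℝ) < lam := lt_of_lt_of_le one_pos hlam
  set b : ℝ := lam ^ (-δ) with hb
  set s₀ : ℝ := lam ^ (-θ) with hs₀
  have hbpos : 0 < b := Real.rpow_pos_of_pos hlam0 _
  have hs₀pos : 0 < s₀ := Real.rpow_pos_of_pos hlam0 _
  have hs₀b : s₀ ≤ b := Real.rpow_le_rpow_of_exponent_le hlam (by linarith)
  have hb1 : b ≤ 1 := by
    calc b ≤ lam ^ (0:ℝ) := Real.rpow_le_rpow_of_exponent_le hlam (by linarith)
    _ = 1 := Real.rpow_zero lam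
  set f : ℝ → ℝ := fun s => (1 + lam ^ 2 * (a s) ^ 2) ^ (-(1/4) : ℝ) with hf
  have hbase : ∀ s, (1:ℝ) ≤ 1 + lam ^ 2 * (a s) ^ 2 := by
    intro s; nlinarith [sq_nonneg (a s), sq_nonneg lam]
  have hf_le_one : ∀ s, f s ≤ 1 := fun s =>
    Real.rpow_le_one_of_one_le_of_nonpos (hbase s) (by norm_num)
  have hf_nonneg : ∀ s, 0 ≤ f s := fun s =>
    Real.rpow_nonneg (le_trans zero_le_one (hbase s)) _
  have hfmeas : Measurable f := by
    have : Measurable fun s => 1 + lam ^ 2 * (a s) ^ 2 :=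
      measurable_const.add (measurable_const.mul (hmeas.pow measurable_const))
    fun_prop
  have hint : IntegrableOn f (Ioo 0 b) := by
    refine Integrable.mono' (g := fun _ => (1:ℝ)) ?_ hfmeas.aestronglyMeasurable.restrict ?_
    · exact integrableOn_const measure_Ioo_lt_top.ne
    · filter_upwards with s
      rw [Real.norm_eq_abs, abs_of_nonneg (hf_nonneg s)]
      exact hf_le_one s
  -- split the integral
  have hsplit : (∫ s in Ioo (0:ℝ) b, f s)
      = (∫ s in Ioo (0:ℝ) s₀, f s) + ∫ s in Ico s₀ b, f s := by
    rw [← setIntegral_union ((Set.disjoint_left.2 fun x hx1 hx2 => absurd hx1.2 (not_lt.2 hx2.1))) measurableSet_Ico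
      (hint.mono_set (by rw [← Ioo_union_Ico_eq_Ioo hs₀pos hs₀b]; exact subset_union_left))
      (hint.mono_set (by rw [← Ioo_union_Ico_eq_Ioo hs₀pos hs₀b]; exact subset_union_right)),
      Ioo_union_Ico_eq_Ioo hs₀pos hs₀b]
  -- first piece
  have h1 : (∫ s in Ioo (0:ℝ) s₀, f s) ≤ s₀ := by
    have := norm_setIntegral_le_of_norm_le_const (μ := volume) (s := Ioo (0:ℝ) s₀)
      (C := 1) (f := f) measure_Ioo_lt_top
      (fun x _ => by rw [Real.norm_eq_abs, abs_of_nonneg (hf_nonneg x)]; exact hf_le_one x)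
    calc (∫ s in Ioo (0:ℝ) s₀, f s) ≤ ‖∫ s in Ioo (0:ℝ) s₀, f s‖ := le_abs_self _
    _ ≤ 1 * (volume (Ioo (0:ℝ) s₀)).toReal := this
    _ = s₀ := by rw [Real.volume_Ioo, one_mul, sub_zero, ENNReal.toReal_ofReal hs₀pos.le]
  -- second piece
  set K : ℝ := lam * (c * s₀ ^ α) with hK
  have hKpos : 0 < K := by positivity
  have hfK : ∀ s ∈ Ico s₀ b, f s ≤ K ^ (-(1/2) : ℝ) := by
    intro s hs
    have hs0 : 0 < s := lt_of_lt_of_le hs₀pos hs.1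
    have hs1 : s ≤ 1 := le_trans (le_of_lt hs.2) hb1
    have has : c * s₀ ^ α ≤ a s := by
      refine le_trans ?_ (hlower s ⟨hs0, hs1⟩)
      exact mul_le_mul_of_nonneg_left (Real.rpow_le_rpow hs₀pos.le hs.1 hα.le) hc.le
    have hK2 : K ^ 2 ≤ 1 + lam ^ 2 * (a s) ^ 2 := by
      have ha0 : 0 ≤ a s := le_trans (by positivity) has
      have : K ≤ lam * a s := by
        rw [hK]; exact mul_le_mul_of_nonneg_left has hlam0.le
      nlinarith [hKpos.le]
    have := Real.rpow_le_rpow_of_nonpos (by positivity) hK2 (by norm_num : (-(1/4):ℝ) ≤ 0)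
    calc f s ≤ (K ^ 2) ^ (-(1/4) : ℝ) := this
    _ = K ^ (-(1/2) : ℝ) := by
        rw [← Real.rpow_natCast K 2, ← Real.rpow_mul hKpos.le]; norm_num
  have h2 : (∫ s in Ico s₀ b, f s) ≤ b * K ^ (-(1/2) : ℝ) := by
    have := norm_setIntegral_le_of_norm_le_const (μ := volume) (s := Ico s₀ b)
      (C := K ^ (-(1/2) : ℝ)) (f := f) measure_Ico_lt_top
      (fun x hx => by rw [Real.norm_eq_abs, abs_of_nonneg (hf_nonneg x)]; exact hfK x hx)
    calc (∫ s in Ico s₀ b, f s) ≤ ‖∫ s in Ico s₀ b, f s‖ := le_abs_self _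
    _ ≤ K ^ (-(1/2) : ℝ) * (volume (Ico s₀ b)).toReal := this
    _ ≤ b * K ^ (-(1/2) : ℝ) := by
        rw [Real.volume_Ico, ENNReal.toReal_ofReal (by linarith), mul_comm]
        apply mul_le_mul_of_nonneg_right _ (Real.rpow_nonneg hKpos.le _)
        linarith
  -- compute b * K^{-1/2}
  have hKval : K = c * lam ^ (1 - θ * α) := by
    rw [hK, hs₀, ← Real.rpow_mul hlam0.le, neg_mul,
      show (1 - θ * α) = 1 + -(θ * α) by ring, Real.rpow_add hlam0, Real.rpow_one]
    ring
  have hkey : b * K ^ (-(1/2) : ℝ) = (Real.sqrt c)⁻¹ * lam ^ (-θ) := by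
    rw [hKval, Real.mul_rpow hc.le (Real.rpow_nonneg hlam0.le _),
      ← Real.rpow_mul hlam0.le, hb, mul_comm (c ^ (-(1/2):ℝ)) _, ← mul_assoc,
      ← Real.rpow_add hlam0, Real.sqrt_eq_rpow, ← Real.rpow_neg hc.le]
    have he : -δ + (1 - θ * α) * (-(1/2)) = -θ := by
      rw [hθdef]; field_simp; ring
    rw [he]; ring
  have hgoal : -(1 + 2 * δ) / (2 + α) = -θ := by rw [hθdef]; ring
  rw [hgoal]
  calc (∫ s in Ioo (0:ℝ) b, f s) = (∫ s in Ioo (0:ℝ) s₀, f s) + ∫ s in Ico s₀ b, f s := hsplit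
  _ ≤ s₀ + b * K ^ (-(1/2) : ℝ) := add_le_add h1 h2
  _ = (1 + (Real.sqrt c)⁻¹) * lam ^ (-θ) := by rw [hkey, hs₀]; ring
end

section
/- Let α > 0, δ > 0 with αδ < 1, let −1 < β ≤ 0, and let c > 0. Let a : (0,1] → ℝ be a nonnegative measurable function with a(s) ≥ c s^α for all s ∈ (0,1]. Then there exists a constant C > 0 such that for every λ ≥ 1, ∫_0^{λ^{−δ}} s^{−β} (1 + λ² a(s)²)^{−1/2} ds ≤ C λ^{−(1−αδ)/(1+α) − δ(1−β)}. -/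
open MeasureTheory Set

/-- For `α, δ > 0` with `αδ < 1`, `-1 < β ≤ 0`, and `a(s) ≥ c sᵅ` on `(0,1]`, there is
`C > 0` with `∫₀^(λ^(-δ)) s^(-β) (1 + λ² a(s)²)^(-1/2) ds ≤ C λ^(-(1-αδ)/(1+α) - δ(1-β))`
for all `λ ≥ 1`. -/
theorem integral_half_power_bound (α δ β c : ℝ) (hα : 0 < α) (hδ : 0 < δ)
    (hαδ : α * δ < 1) (hβ1 : -1 < β) (hβ0 : β ≤ 0) (hc : 0 < c)
    (a : ℝ → ℝ) (hmeas : Measurable a)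
    (hnonneg : ∀ s ∈ Ioc (0:ℝ) 1, 0 ≤ a s)
    (hlower : ∀ s ∈ Ioc (0:ℝ) 1, c * s ^ α ≤ a s) :
    ∃ C : ℝ, 0 < C ∧ ∀ lam : ℝ, 1 ≤ lam →
      (∫ s in Ioo (0:ℝ) (lam ^ (-δ)), s ^ (-β) * (1 + lam ^ 2 * (a s) ^ 2) ^ (-(1/2) : ℝ))
        ≤ C * lam ^ (-(1 - α * δ) / (1 + α) - δ * (1 - β)) := by
  have h1β : (0:ℝ) < 1 - β := by linarith
  have h1α : (0:ℝ) < 1 + α := by linarith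
  refine ⟨1/(1-β) + 1/c, by positivity, ?_⟩
  intro lam hlam
  have hlam0 : (0:ℝ) < lam := lt_of_lt_of_le one_pos hlam
  set T : ℝ := -(1 - α*δ)/(1+α) - δ*(1-β) with hT
  set σ : ℝ := lam ^ (-(1+δ)/(1+α)) with hσdef
  set b : ℝ := lam ^ (-δ) with hbdef
  set h : ℝ → ℝ := fun s => s ^ (-β) * (1 + lam ^ 2 * (a s) ^ 2) ^ (-(1/2) : ℝ) with hhdef
  have hσpos : 0 < σ := Real.rpow_pos_of_pos hlam0 _
  have hbpos : 0 < b := Real.rpow_pos_of_pos hlam0 _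
  have hσb : σ ≤ b := by
    apply Real.rpow_le_rpow_of_exponent_le hlam
    rw [div_le_iff₀ h1α]
    nlinarith
  have hb1 : b ≤ 1 := Real.rpow_le_one_of_one_le_of_nonpos hlam (by linarith)
  have hlamT : 0 < lam ^ T := Real.rpow_pos_of_pos hlam0 _
  -- pointwise facts
  have hmem : ∀ s ∈ Ioo (0:ℝ) b, s ∈ Ioc (0:ℝ) 1 :=
    fun s hs => ⟨hs.1, le_trans hs.2.le hb1⟩
  have hbase : ∀ s : ℝ, (1:ℝ) ≤ 1 + lam ^ 2 * (a s) ^ 2 := by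
    intro s; nlinarith [sq_nonneg (lam * a s)]
  have hnn : ∀ s ∈ Ioo (0:ℝ) b, 0 ≤ h s := by
    intro s hs
    exact mul_nonneg (Real.rpow_nonneg hs.1.le _)
      (Real.rpow_nonneg (by linarith [hbase s]) _)
  have hle : ∀ s ∈ Ioo (0:ℝ) b, h s ≤ s ^ (-β) := by
    intro s hs
    have : (1 + lam ^ 2 * (a s) ^ 2) ^ (-(1/2) : ℝ) ≤ 1 :=
      Real.rpow_le_one_of_one_le_of_nonpos (hbase s) (by norm_num)
    calc h s ≤ s ^ (-β) * 1 := by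
          exact mul_le_mul_of_nonneg_left this (Real.rpow_nonneg hs.1.le _)
      _ = s ^ (-β) := mul_one _
  -- measurability
  have hmeasH : Measurable h := by
    rw [hhdef]; fun_prop
  -- integrability of the bound
  have hgint : IntegrableOn (fun s : ℝ => s ^ (-β)) (Ioo 0 b) := by
    have h1 : IntervalIntegrable (fun s : ℝ => s ^ (-β)) volume 0 b :=
      intervalIntegral.intervalIntegrable_rpow' (by linarith)
    rw [intervalIntegrable_iff_integrableOn_Ioc_of_le hbpos.le] at h1
    exact h1.mono_set Ioo_subset_Ioc_self
  have hHint : IntegrableOn h (Ioo 0 b) := by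
    apply hgint.mono' (hmeasH.aestronglyMeasurable.restrict)
    rw [ae_restrict_iff' measurableSet_Ioo]
    filter_upwards with s hs
    rw [Real.norm_eq_abs, abs_of_nonneg (hnn s hs)]
    exact hle s hs
  -- split
  have hsub1 : Ioo (0:ℝ) σ ⊆ Ioo 0 b := Ioo_subset_Ioo_right hσb
  have hsub2 : Ico σ b ⊆ Ioo (0:ℝ) b := fun x hx => ⟨lt_of_lt_of_le hσpos hx.1, hx.2⟩
  have hsplit : (∫ s in Ioo (0:ℝ) b, h s)
      = (∫ s in Ioo (0:ℝ) σ, h s) + (∫ s in Ico σ b, h s) := by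
    rw [← Ioo_union_Ico_eq_Ioo hσpos hσb]
    apply setIntegral_union
    · rw [Set.disjoint_left]; rintro x ⟨_, h2⟩ ⟨h3, _⟩; exact absurd h3 (not_le.2 h2)
    · exact measurableSet_Ico
    · exact (hHint.mono_set hsub1)
    · exact (hHint.mono_set hsub2)
  -- piece 1
  have hval : (∫ s in Ioo (0:ℝ) σ, s ^ (-β)) = σ ^ (1-β) / (1-β) := by
    rw [← integral_Ioc_eq_integral_Ioo, ← intervalIntegral.integral_of_le hσpos.le,
      integral_rpow (Or.inl (by linarith)), Real.zero_rpow (by linarith),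
      show -β + 1 = 1 - β by ring, sub_zero]
  have hσT : σ ^ (1-β) ≤ lam ^ T := by
    rw [hσdef, ← Real.rpow_mul hlam0.le]
    apply Real.rpow_le_rpow_of_exponent_le hlam
    have hdiff : T - (-(1+δ)/(1+α))*(1-β) = (-β)*(1-α*δ)/(1+α) := by
      rw [hT]; field_simp; ring
    have hnum : 0 ≤ (-β)*(1-α*δ)/(1+α) :=
      div_nonneg (mul_nonneg (by linarith) (by linarith)) h1α.le
    linarith [hdiff ▸ hnum]
  have hp1 : (∫ s in Ioo (0:ℝ) σ, h s) ≤ (1/(1-β)) * lam ^ T := by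
    have h1 : (∫ s in Ioo (0:ℝ) σ, h s) ≤ ∫ s in Ioo (0:ℝ) σ, s ^ (-β) := by
      apply setIntegral_mono_on (hHint.mono_set hsub1) (hgint.mono_set hsub1)
        measurableSet_Ioo
      intro s hs; exact hle s (hsub1 hs)
    rw [hval] at h1
    calc (∫ s in Ioo (0:ℝ) σ, h s) ≤ σ ^ (1-β) / (1-β) := h1
      _ ≤ lam ^ T / (1-β) := by gcongr
      _ = (1/(1-β)) * lam ^ T := by ring
  -- piece 2
  set K : ℝ := b ^ (-β) / (lam * (c * σ ^ α)) with hKdef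
  have hKpos : 0 < K := by
    apply div_pos (Real.rpow_pos_of_pos hbpos _)
    positivity
  have hleK : ∀ s ∈ Ico σ b, h s ≤ K := by
    intro s hs
    have hs0 : 0 < s := lt_of_lt_of_le hσpos hs.1
    have hs1 : s ∈ Ioc (0:ℝ) 1 := hmem s ⟨hs0, hs.2⟩
    have has : c * σ ^ α ≤ a s := by
      calc c * σ ^ α ≤ c * s ^ α :=
            mul_le_mul_of_nonneg_left (Real.rpow_le_rpow hσpos.le hs.1 hα.le) hc.le
        _ ≤ a s := hlower s hs1
    have haspos : 0 < a s := lt_of_lt_of_le (by positivity) has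
    have hf2 : (1 + lam ^ 2 * (a s) ^ 2) ^ (-(1/2) : ℝ) ≤ (lam * a s)⁻¹ := by
      have h1 : (1 + lam ^ 2 * (a s) ^ 2) ^ (-(1/2) : ℝ)
          ≤ ((lam * a s) ^ 2) ^ (-(1/2) : ℝ) := by
        apply Real.rpow_le_rpow_of_nonpos (by positivity) (by nlinarith) (by norm_num)
      have h2 : ((lam * a s) ^ 2) ^ (-(1/2) : ℝ) = (lam * a s)⁻¹ := by
        rw [← Real.rpow_natCast (lam * a s) 2, ← Real.rpow_mul (by positivity)]
        norm_num
        rw [Real.rpow_neg_one, mul_inv, mul_comm]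
      rw [h2] at h1; exact h1
    calc h s ≤ b ^ (-β) * (lam * a s)⁻¹ := by
          apply mul_le_mul
          · exact Real.rpow_le_rpow hs0.le hs.2.le (by linarith)
          · exact hf2
          · exact Real.rpow_nonneg (by linarith [hbase s]) _
          · exact Real.rpow_nonneg hbpos.le _
      _ ≤ b ^ (-β) * (lam * (c * σ ^ α))⁻¹ := by
          apply mul_le_mul_of_nonneg_left _ (Real.rpow_nonneg hbpos.le _)
          apply inv_anti₀ (by positivity)
          exact mul_le_mul_of_nonneg_left has hlam0.le
      _ = K := by rw [hKdef, div_eq_mul_inv]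
  have hp2 : (∫ s in Ico σ b, h s) ≤ K * b := by
    have h1 : (∫ s in Ico σ b, h s) ≤ ∫ _ in Ico σ b, K := by
      apply setIntegral_mono_on (hHint.mono_set hsub2)
        (integrableOn_const measure_Ico_lt_top.ne) measurableSet_Ico hleK
    have h2 : (∫ _ in Ico σ b, K) = (b - σ) * K := by
      rw [setIntegral_const, measureReal_def, Real.volume_Ico, ENNReal.toReal_ofReal (by linarith), smul_eq_mul]
    rw [h2] at h1
    calc (∫ s in Ico σ b, h s) ≤ (b - σ) * K := h1
      _ ≤ b * K := by nlinarith
      _ = K * b := mul_comm _ _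
  have hKb : K * b = (1/c) * lam ^ T := by
    have e1 : b ^ (-β) = lam ^ ((-δ)*(-β)) := by
      rw [hbdef, ← Real.rpow_mul hlam0.le]
    have e2 : σ ^ α = lam ^ ((-(1+δ)/(1+α))*α) := by
      rw [hσdef, ← Real.rpow_mul hlam0.le]
    have e3 : (-δ)*(-β) + (-δ) = T + 1 + (-(1+δ)/(1+α))*α := by
      rw [hT]; field_simp; ring
    rw [hKdef, e1, e2, hbdef]
    rw [div_mul_eq_mul_div, ← Real.rpow_add hlam0, e3, div_eq_iff (by positivity)]
    rw [Real.rpow_add hlam0, Real.rpow_add hlam0, Real.rpow_one]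
    field_simp
  -- conclude
  have : (∫ s in Ioo (0:ℝ) b, h s) ≤ (1/(1-β)) * lam ^ T + (1/c) * lam ^ T := by
    rw [hsplit]
    exact add_le_add hp1 (by rw [← hKb]; exact hp2)
  calc (∫ s in Ioo (0:ℝ) b, h s) ≤ (1/(1-β)) * lam ^ T + (1/c) * lam ^ T := this
    _ = (1/(1-β) + 1/c) * lam ^ T := by ring
end

section
/- Let α > 0, δ > 0 with αδ < 1, and c > 0, and let a : (0,1] → ℝ be a nonnegative measurable function with a(s) ≥ c s^α for all s ∈ (0,1]. Then there exists a constant C > 0 such that for every λ ≥ 1, ∫_0^{λ^{−δ}} (1 + λ² a(s)²)^{−1} ds ≤ C λ^{−(2+δ)/(1+2α)}. -/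
open MeasureTheory Set

/-- For `α, δ > 0` with `αδ < 1` and `a(s) ≥ c sᵅ` on `(0,1]`, there is `C > 0` with
`∫₀^(λ^(-δ)) (1 + λ² a(s)²)⁻¹ ds ≤ C λ^(-(2+δ)/(1+2α))` for all `λ ≥ 1`. -/
theorem integral_inverse_bound (α δ c : ℝ) (hα : 0 < α) (hδ : 0 < δ)
    (hαδ : α * δ < 1) (hc : 0 < c) (a : ℝ → ℝ) (hmeas : Measurable a)
    (hnonneg : ∀ s ∈ Ioc (0:ℝ) 1, 0 ≤ a s)
    (hlower : ∀ s ∈ Ioc (0:ℝ) 1, c * s ^ α ≤ a s) :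
    ∃ C : ℝ, 0 < C ∧ ∀ lam : ℝ, 1 ≤ lam →
      (∫ s in Ioo (0:ℝ) (lam ^ (-δ)), (1 + lam ^ 2 * (a s) ^ 2)⁻¹)
        ≤ C * lam ^ (-(2 + δ) / (1 + 2 * α)) := by
  refine ⟨1 + c⁻¹ ^ 2, by positivity, fun lam hlam => ?_⟩
  have hlam0 : (0:ℝ) < lam := lt_of_lt_of_le one_pos hlam
  set e : ℝ := -(2 + δ) / (1 + 2 * α) with he
  set β : ℝ := lam ^ e with hβ
  set L : ℝ := lam ^ (-δ) with hL
  have hβ0 : 0 < β := Real.rpow_pos_of_pos hlam0 _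
  have hden : (0:ℝ) < 1 + 2 * α := by linarith
  have heδ : e ≤ -δ := by
    rw [he, div_le_iff₀ hden]
    nlinarith
  have hβL : β ≤ L := Real.rpow_le_rpow_of_exponent_le hlam heδ
  have hL1 : L ≤ 1 := Real.rpow_le_one_of_one_le_of_nonpos hlam (by linarith)
  set f : ℝ → ℝ := fun s => (1 + lam ^ 2 * a s ^ 2)⁻¹ with hf
  have hfnn : ∀ s, 0 ≤ f s := fun s => by
    have : (0:ℝ) ≤ 1 + lam ^ 2 * a s ^ 2 := by positivity
    positivity
  have hf1 : ∀ s, f s ≤ 1 := fun s => by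
    have h1 : (1:ℝ) ≤ 1 + lam ^ 2 * a s ^ 2 := by nlinarith [sq_nonneg (a s), sq_nonneg lam]
    simpa using inv_le_one_of_one_le₀ h1
  have hfm : Measurable f :=
    (measurable_const.add (measurable_const.mul (hmeas.pow_const 2))).inv
  have hintOn : ∀ (S : Set ℝ), volume S < ⊤ → IntegrableOn f S := by
    intro S hSfin
    refine Integrable.mono' (integrableOn_const (C := (1:ℝ)) hSfin.ne)
      hfm.aestronglyMeasurable.restrict ?_
    filter_upwards with s
    rw [Real.norm_eq_abs, abs_of_nonneg (hfnn s)]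
    exact hf1 s
  have hI1 : IntegrableOn f (Ioo 0 β) := hintOn _ measure_Ioo_lt_top
  have hI2 : IntegrableOn f (Ico β L) := hintOn _ measure_Ico_lt_top
  have hsplit : Ioo (0:ℝ) L = Ioo 0 β ∪ Ico β L := (Ioo_union_Ico_eq_Ioo hβ0 hβL).symm
  have hb1 : ∫ s in Ioo (0:ℝ) β, f s ≤ β := by
    calc ∫ s in Ioo (0:ℝ) β, f s ≤ ∫ _s in Ioo (0:ℝ) β, (1:ℝ) :=
          setIntegral_mono_on hI1 (integrableOn_const measure_Ioo_lt_top.ne)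
            measurableSet_Ioo (fun s _ => hf1 s)
      _ = β := by
          rw [setIntegral_const, measureReal_def, Real.volume_Ioo, sub_zero, ENNReal.toReal_ofReal hβ0.le,
            smul_eq_mul, mul_one]
  have hcβ : 0 < c * β ^ α := by positivity
  have hK : ∀ s ∈ Ico β L, f s ≤ (lam ^ 2 * (c * β ^ α) ^ 2)⁻¹ := by
    intro s hs
    have hs0 : 0 < s := lt_of_lt_of_le hβ0 hs.1
    have hmem : s ∈ Ioc (0:ℝ) 1 := ⟨hs0, le_trans hs.2.le hL1⟩
    have h1 : c * β ^ α ≤ a s :=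
      le_trans (mul_le_mul_of_nonneg_left (Real.rpow_le_rpow hβ0.le hs.1 hα.le) hc.le)
        (hlower s hmem)
    have h2 : lam ^ 2 * (c * β ^ α) ^ 2 ≤ 1 + lam ^ 2 * a s ^ 2 := by
      have hsq : (c * β ^ α) ^ 2 ≤ a s ^ 2 := by nlinarith [hcβ.le]
      nlinarith [sq_nonneg lam]
    exact inv_anti₀ (by positivity) h2
  have hβα2 : (β ^ α) ^ 2 = lam ^ (e * α * 2) := by
    rw [hβ, ← Real.rpow_natCast ((lam ^ e) ^ α) 2, ← Real.rpow_mul hlam0.le,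
      ← Real.rpow_mul hlam0.le]
    norm_num
  have h2r : (lam:ℝ) ^ 2 = lam ^ (2:ℝ) := by
    rw [← Real.rpow_natCast lam 2]; norm_num
  have key : L * (lam ^ 2 * (c * β ^ α) ^ 2)⁻¹ = c⁻¹ ^ 2 * β := by
    have hexp : -δ + (-(2:ℝ) + -(e * α * 2)) = e := by
      rw [he]; field_simp; ring
    calc L * (lam ^ 2 * (c * β ^ α) ^ 2)⁻¹
        = c⁻¹ ^ 2 * (lam ^ (-δ) * ((lam ^ (2:ℝ))⁻¹ * (lam ^ (e * α * 2))⁻¹)) := by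
          rw [hL, mul_pow, hβα2, h2r, mul_inv, mul_inv, inv_pow]
          ring
      _ = c⁻¹ ^ 2 * β := by
          rw [← Real.rpow_neg hlam0.le, ← Real.rpow_neg hlam0.le,
            ← Real.rpow_add hlam0, ← Real.rpow_add hlam0, hexp, hβ]
  have hb2 : ∫ s in Ico β L, f s ≤ c⁻¹ ^ 2 * β := by
    calc ∫ s in Ico β L, f s ≤ ∫ _s in Ico β L, (lam ^ 2 * (c * β ^ α) ^ 2)⁻¹ :=
          setIntegral_mono_on hI2 (integrableOn_const measure_Ico_lt_top.ne)
            measurableSet_Ico hK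
      _ = (L - β) * (lam ^ 2 * (c * β ^ α) ^ 2)⁻¹ := by
          rw [setIntegral_const, measureReal_def, Real.volume_Ico, ENNReal.toReal_ofReal (by linarith),
            smul_eq_mul]
      _ ≤ L * (lam ^ 2 * (c * β ^ α) ^ 2)⁻¹ :=
          mul_le_mul_of_nonneg_right (by linarith) (by positivity)
      _ = c⁻¹ ^ 2 * β := key
  calc (∫ s in Ioo (0:ℝ) L, f s)
      = (∫ s in Ioo (0:ℝ) β, f s) + ∫ s in Ico β L, f s := by
        rw [hsplit, setIntegral_union ((Iio_disjoint_Ici le_rfl).mono Ioo_subset_Iio_self Ico_subset_Ici_self) measurableSet_Ico hI1 hI2]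
    _ ≤ β + c⁻¹ ^ 2 * β := add_le_add hb1 hb2
    _ = (1 + c⁻¹ ^ 2) * β := by ring
end
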